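/- arXiv:2308.06839 — 2 statements merged into one kernel-verified Lean document; each statement's English description precedes it below -/
import Mathlib

section
/- Suppose 0 ≤ ν_k ≤ ν_{k-1} ≤ ⋯ ≤ ν_1 are real numbers with ν_1 + ν_2 + ⋯ + ν_k ≥ 1, ν_1 < 5/8 − 8ϖ where ϖ = 1/1168, and for every subset I ⊆ {1,…,k} the sum Σ_{i∈I} ν_i does not lie in the closed interval [3/8 + 8ϖ, 5/8 − 8ϖ]. Then ν_2 + ν_3 > 5/8 − 8ϖ. -/
/-!
Write `A = 3/8 + 8ϖ` and `B = 5/8 - 8ϖ`, so `A + B = 1`, and suppose `ν₂ + ν₃ ≤ B`. Since no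
subset sum lies in `[A, B]`, we get `ν₁ < A` and `ν₂ + ν₃ < A`, so every `νᵢ` with `i ≥ 3` is
at most `ν₃ < A/2 < B - A`. Adding such small terms one at a time to a sum below `A` can never
jump over the gap `[A, B]`, so the sum stays below `A`. Starting from `{1, 2}` if `ν₁ + ν₂ < A`
this bounds the total sum by `A < 1`; otherwise `ν₁ + ν₂ > B` and, starting from `{1}`, the
total sum is below `A + ν₂ < 2A < 1`. Either way `∑ νᵢ ≥ 1` is contradicted.
-/

open Finset

theorem sum_union_lt_of_forall_sum_union_notMem_Icc {ι α : Type*} [DecidableEq ι]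
    [AddCommGroup α] [LinearOrder α] [IsOrderedAddMonoid α] {f : ι → α} {a b : α}
    {T S : Finset ι} (hTS : Disjoint T S) (hT : ∑ i ∈ T, f i < a)
    (hsmall : ∀ i ∈ S, f i ≤ b - a)
    (hgap : ∀ U ⊆ S, ∑ i ∈ T ∪ U, f i ∉ Set.Icc a b) :
    ∑ i ∈ T ∪ S, f i < a := by
  induction S using Finset.induction_on with
  | empty => simpa using hT
  | insert x S hx ih =>
    have hxT : x ∉ T := disjoint_right.mp hTS (mem_insert_self x S)
    have hS : ∑ i ∈ T ∪ S, f i < a :=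
      ih (disjoint_of_subset_right (subset_insert x S) hTS)
        (fun i hi => hsmall i (mem_insert_of_mem hi))
        (fun U hU => hgap U (hU.trans (subset_insert x S)))
    have hsplit : ∑ i ∈ T ∪ insert x S, f i = ∑ i ∈ T ∪ S, f i + f x := by
      rw [union_insert, sum_insert (by simp [hx, hxT]), add_comm]
    have hlt : ∑ i ∈ T ∪ insert x S, f i < b := by
      rw [hsplit]
      calc ∑ i ∈ T ∪ S, f i + f x < a + (b - a) :=
          add_lt_add_of_lt_of_le hS (hsmall x (mem_insert_self x S))
        _ = b := add_sub_cancel a b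
    by_contra hge
    exact hgap _ Subset.rfl ⟨not_lt.mp hge, hlt.le⟩

theorem Nat.Icc_one_eq_union_Icc_three {k : ℕ} (hk : 2 ≤ k) :
    Icc 1 k = {1, 2} ∪ Icc 3 k := by
  ext i
  simp only [mem_union, mem_insert, mem_singleton, mem_Icc]
  omega

section

variable {k : ℕ} {a b : ℝ} {ν : ℕ → ℝ}

theorem sum_add_sum_Icc_three_lt (hk : 2 ≤ k) (hsmall : ∀ i ∈ Icc 3 k, ν i ≤ b - a)
    (hI : ∀ I ⊆ Icc 1 k, ∑ i ∈ I, ν i ∉ Set.Icc a b) {T : Finset ℕ} (hT : T ⊆ {1, 2})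
    (hTa : ∑ i ∈ T, ν i < a) :
    ∑ i ∈ T, ν i + ∑ i ∈ Icc 3 k, ν i < a := by
  have hTS : Disjoint T (Icc 3 k) := disjoint_of_subset_left hT (by simp)
  rw [← sum_union hTS]
  exact sum_union_lt_of_forall_sum_union_notMem_Icc hTS hTa hsmall fun U hU =>
    hI _ (Nat.Icc_one_eq_union_Icc_three hk ▸ union_subset_union hT hU)

theorem lt_add_of_forall_subset_sum_notMem_Icc (hk : 3 ≤ k) (h3a : 3 * a ≤ 2 * b)
    (h2a : 2 * a ≤ 1) (hmono : ∀ i j, 1 ≤ i → i ≤ j → j ≤ k → ν j ≤ ν i)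
    (hsum : 1 ≤ ∑ i ∈ Icc 1 k, ν i) (hν1 : ν 1 < b)
    (hI : ∀ I ⊆ Icc 1 k, ∑ i ∈ I, ν i ∉ Set.Icc a b) :
    b < ν 2 + ν 3 := by
  by_contra! h23
  have hbelow : ∀ I ⊆ Icc 1 k, ∑ i ∈ I, ν i ≤ b → ∑ i ∈ I, ν i < a := fun I hIk hle =>
    lt_of_not_ge fun hge => hI I hIk ⟨hge, hle⟩
  have h1 : ν 1 < a := by simpa using hbelow {1} (by simp; omega) (by simpa using hν1.le)
  have h23a : ν 2 + ν 3 < a := by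
    simpa using hbelow {2, 3} (by intro i; simp; omega) (by simpa using h23)
  have h21 : ν 2 ≤ ν 1 := hmono 1 2 le_rfl one_le_two (by omega)
  have h32 : ν 3 ≤ ν 2 := hmono 2 3 one_le_two (by norm_num) hk
  have hsmall : ∀ i ∈ Icc 3 k, ν i ≤ b - a := fun i hi => by
    rw [mem_Icc] at hi
    linarith [hmono 3 i (by norm_num) hi.1 hi.2]
  have htotal : ∑ i ∈ Icc 1 k, ν i = ν 1 + ν 2 + ∑ i ∈ Icc 3 k, ν i := by
    rw [Nat.Icc_one_eq_union_Icc_three (by omega), sum_union (by simp), sum_pair (by norm_num)]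
  have h12 := hI {1, 2} (by intro i; simp; omega)
  rw [sum_pair (by norm_num), Set.mem_Icc, not_and_or, not_le, not_le] at h12
  rcases h12 with h12 | h12
  · have := sum_add_sum_Icc_three_lt (by omega) hsmall hI Subset.rfl
      (by rwa [sum_pair (by norm_num)])
    rw [sum_pair (by norm_num)] at this
    linarith
  · have := sum_add_sum_Icc_three_lt (by omega) hsmall hI (T := {1}) (by simp) (by simpa using h1)
    rw [sum_singleton] at this
    linarith

end

theorem stmt3_general (k : ℕ) (hk : 4 ≤ k) (ϖ : ℝ) (hϖ : ϖ = 1 / 1168) (ν : ℕ → ℝ)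
    (hmono : ∀ i j, 1 ≤ i → i ≤ j → j ≤ k → ν j ≤ ν i)
    (hsum : 1 ≤ ∑ i ∈ Finset.Icc 1 k, ν i)
    (hν1 : ν 1 < 5 / 8 - 8 * ϖ)
    (hI : ∀ I ⊆ Finset.Icc 1 k,
      (∑ i ∈ I, ν i) ∉ Set.Icc (3 / 8 + 8 * ϖ) (5 / 8 - 8 * ϖ)) :
    5 / 8 - 8 * ϖ < ν 2 + ν 3 := by
  subst hϖ
  exact lt_add_of_forall_subset_sum_notMem_Icc (by omega) (by norm_num) (by norm_num)
    hmono hsum hν1 hI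

/-- The combinatorial lemma for the Type III case: under the stated conditions
on the exponents `ν_i`, one has `ν₂ + ν₃ > 5/8 − 8ϖ`. -/
theorem stmt3 (k : ℕ) (hk : 4 ≤ k) (ϖ : ℝ) (hϖ : ϖ = 1 / 1168) (ν : ℕ → ℝ)
    (hnonneg : ∀ i ∈ Finset.Icc 1 k, 0 ≤ ν i)
    (hmono : ∀ i j, 1 ≤ i → i ≤ j → j ≤ k → ν j ≤ ν i)
    (hsum : 1 ≤ ∑ i ∈ Finset.Icc 1 k, ν i)
    (hν1 : ν 1 < 5 / 8 - 8 * ϖ)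
    (hI : ∀ I ⊆ Finset.Icc 1 k,
      (∑ i ∈ I, ν i) ∉ Set.Icc (3 / 8 + 8 * ϖ) (5 / 8 - 8 * ϖ)) :
    5 / 8 - 8 * ϖ < ν 2 + ν 3 :=
  stmt3_general k hk ϖ hϖ ν hmono hsum hν1 hI
end

section
/- Let d ≥ 1 be squarefree, suppose X^{(1/2) − 1/(12(k+1))} < d < X^{1/2 + 2ϖ} with ϖ = 1/1168, gcd(d, P₀) < X^ϖ where P₀ = ∏_{p ≤ D₀} p with D₀ = X^{ϖ^{4/3}}, and gcd(d, P₁) > X^{1/8 − 4ϖ} where P₁ = ∏_{p ≤ X^ϖ} p. Then for any R* with X^{2ϖ} ≤ R* ≤ X^{45ϖ}, there exists a factorization d = q·r with X^{−ϖ} R* < r < R* and gcd(q, P₀) = 1. -/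
/-!
Put `A = gcd(d, P₀)` and `g = gcd(d, P₁)`, so that `A ∣ g`, `A < X^ϖ ≤ X^{-ϖ} R*` and
`X^{-ϖ} R* ≤ R* ≤ X^{45ϖ} < g`. Multiplying primes of `g / A` (all at most `X^ϖ`) into `A`,
the smallest such product `r` exceeding `X^{-ϖ} R*` overshoots by less than a factor `X^ϖ`,
so `r < R*`. Since `d` is squarefree and `r` contains every prime factor of `d` up to `D₀`,
`q = d / r` is coprime to `P₀`.
-/

open Finset

lemma Nat.le_of_prime_dvd_prod_primes_Icc {p N : ℕ} (hp : p.Prime)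
    (h : p ∣ ∏ q ∈ filter Nat.Prime (Icc 2 N), q) : p ≤ N := by
  obtain ⟨q, hq, hpq⟩ := hp.prime.exists_mem_finset_dvd h
  rw [mem_filter, mem_Icc] at hq
  rw [(Nat.prime_dvd_prime_iff_eq hp hq.2).1 hpq]
  exact hq.1.2

lemma Nat.prod_primes_Icc_dvd_of_le {M N : ℕ} (h : M ≤ N) :
    ∏ q ∈ filter Nat.Prime (Icc 2 M), q ∣ ∏ q ∈ filter Nat.Prime (Icc 2 N), q :=
  prod_dvd_prod_of_subset _ _ _ (filter_subset_filter _ (Icc_subset_Icc_right h))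

lemma Nat.Coprime.div_of_gcd_dvd {d r P : ℕ} (hd : Squarefree d) (hrd : r ∣ d)
    (h : d.gcd P ∣ r) : Nat.Coprime (d / r) P := by
  have hqr : Nat.Coprime (d / r) r :=
    Nat.coprime_of_squarefree_mul (by rwa [Nat.div_mul_cancel hrd])
  refine Nat.coprime_of_dvd fun p hp hpq hpP => ?_
  have hpd : p ∣ d := hpq.trans (Nat.div_dvd_of_dvd hrd)
  exact hp.not_dvd_one (hqr ▸ Nat.dvd_gcd hpq ((Nat.dvd_gcd hpd hpP).trans h))

/-- Only the two-prime case needs squarefreeness: it rules out `e = B²` with `s * B = T`. -/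
lemma mul_lt_of_forall_prime_dvd {e : ℕ} {s T B : ℝ} (he : Squarefree e) (he1 : e ≠ 1)
    (hB : ∀ p, p.Prime → p ∣ e → (p : ℝ) ≤ B) (hs : 0 ≤ s) (hsT : s < T)
    (hdrop : ∀ p, p.Prime → p ∣ e → s * e ≤ p * T) : s * e < T * B := by
  have hT : 0 < T := hs.trans_lt hsT
  set p := e.minFac
  have hp : p.Prime := Nat.minFac_prime he1
  have hpe : p ∣ e := Nat.minFac_dvd e
  by_cases hep : e = p
  · calc s * e = s * p := by rw [hep]
      _ < T * p := mul_lt_mul_of_pos_right hsT (by exact_mod_cast hp.pos)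
      _ ≤ T * B := mul_le_mul_of_nonneg_left (hB p hp hpe) hT.le
  have hrest : e / p ≠ 1 := fun h => hep (Nat.eq_of_dvd_of_div_eq_one hpe h).symm
  obtain ⟨p', hp', hp'ep⟩ := Nat.exists_prime_and_dvd hrest
  have hp'e : p' ∣ e := hp'ep.trans (Nat.div_dvd_of_dvd hpe)
  have hpp' : p < p' := by
    refine (show p ≤ p' from Nat.minFac_le_of_dvd hp'.two_le hp'e).lt_of_ne fun h => ?_
    subst h
    exact hp.not_isUnit (he p (Nat.mul_dvd_of_dvd_div hpe hp'ep))
  calc s * e ≤ p * T := hdrop p hp hpe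
    _ < p' * T := mul_lt_mul_of_pos_right (by exact_mod_cast hpp') hT
    _ ≤ B * T := mul_le_mul_of_nonneg_right (hB p' hp' hp'e) hT.le
    _ = T * B := mul_comm B T

/-- The smallest divisor `e` of `m` with `T < s * e` works: removing any prime `p` from it
drops below `T`, so `s * e ≤ p * T`. -/
lemma exists_dvd_mul_mem_Ioo {m : ℕ} {s T B : ℝ} (hm : Squarefree m)
    (hB : ∀ p, p.Prime → p ∣ m → (p : ℝ) ≤ B) (hs : 0 ≤ s) (hsT : s < T)
    (hTm : T < s * m) :
    ∃ e, e ∣ m ∧ T < s * e ∧ s * e < T * B := by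
  classical
  set S := m.divisors.filter fun e : ℕ => T < s * e
  have hmS : m ∈ S := mem_filter.2 ⟨Nat.mem_divisors_self m hm.ne_zero, hTm⟩
  obtain ⟨e, heS, hmin⟩ := S.exists_min_image id ⟨m, hmS⟩
  obtain ⟨he, hTe⟩ := mem_filter.1 heS
  have hem : e ∣ m := Nat.dvd_of_mem_divisors he
  have he0 : e ≠ 0 := Nat.ne_of_gt (Nat.pos_of_mem_divisors he)
  refine ⟨e, hem, hTe, mul_lt_of_forall_prime_dvd (hm.squarefree_of_dvd hem) ?_
    (fun p hp hpe => hB p hp (hpe.trans hem)) hs hsT fun p hp hpe => ?_⟩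
  · rintro rfl
    exact hsT.not_gt (by simpa using hTe)
  · have hdiv : e / p ∉ S := fun h =>
      (hmin _ h).not_gt (Nat.div_lt_self (Nat.pos_of_ne_zero he0) hp.one_lt)
    have hle : s * (e / p : ℕ) ≤ T := by
      simpa [S, Nat.div_dvd_of_dvd hpe |>.trans hem, hm.ne_zero] using hdiv
    calc s * e = s * (e / p : ℕ) * p := by
          rw [mul_assoc, ← Nat.cast_mul, Nat.div_mul_cancel hpe]
      _ ≤ T * p := mul_le_mul_of_nonneg_right hle (Nat.cast_nonneg p)
      _ = p * T := mul_comm T p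

lemma exists_eq_mul_mem_Ioo_coprime {d P₀ P₁ : ℕ} {T B : ℝ} (hd : Squarefree d)
    (hP : P₀ ∣ P₁) (hB : ∀ p, p.Prime → p ∣ P₁ → (p : ℝ) ≤ B)
    (h₀ : (d.gcd P₀ : ℝ) < T) (h₁ : T < d.gcd P₁) :
    ∃ q r : ℕ, d = q * r ∧ T < r ∧ r < T * B ∧ Nat.Coprime q P₀ := by
  obtain ⟨m, hm⟩ : d.gcd P₀ ∣ d.gcd P₁ := Nat.gcd_dvd_gcd_of_dvd_right d hP
  have hmsf : Squarefree m :=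
    (hd.squarefree_of_dvd (hm ▸ Nat.gcd_dvd_left d P₁)).of_mul_right
  have hmP : m ∣ P₁ := (Dvd.intro_left _ hm.symm).trans (Nat.gcd_dvd_right d P₁)
  obtain ⟨e, hem, hTe, heB⟩ := exists_dvd_mul_mem_Ioo hmsf
    (fun p hp hpm => hB p hp (hpm.trans hmP)) (Nat.cast_nonneg _) h₀
    (by exact_mod_cast hm ▸ h₁)
  have hrd : d.gcd P₀ * e ∣ d :=
    (hm ▸ mul_dvd_mul_left _ hem).trans (Nat.gcd_dvd_left d P₁)
  exact ⟨d / (d.gcd P₀ * e), d.gcd P₀ * e, (Nat.div_mul_cancel hrd).symm,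
    by exact_mod_cast hTe, by exact_mod_cast heB,
    Nat.Coprime.div_of_gcd_dvd hd hrd (dvd_mul_right _ _)⟩

theorem stmt6_general (X ϖ : ℝ) (hϖ : ϖ = 1 / 1168) (hX : 1 < X)
    (d : ℕ) (hsf : Squarefree d)
    (hP0 : (Nat.gcd d (∏ p ∈ Finset.filter Nat.Prime
        (Finset.Icc 2 ⌊X ^ (ϖ ^ ((4 : ℝ) / 3))⌋₊), p) : ℝ) < X ^ ϖ)
    (hP1 : X ^ ((1 : ℝ) / 8 - 4 * ϖ) < (Nat.gcd d (∏ p ∈ Finset.filter Nat.Prime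
        (Finset.Icc 2 ⌊X ^ ϖ⌋₊), p) : ℝ))
    (R : ℝ) (hR1 : X ^ (2 * ϖ) ≤ R) (hR2 : R ≤ X ^ (45 * ϖ)) :
    ∃ q r : ℕ, d = q * r ∧ X ^ (-ϖ) * R < (r : ℝ) ∧ (r : ℝ) < R ∧
      Nat.gcd q (∏ p ∈ Finset.filter Nat.Prime
        (Finset.Icc 2 ⌊X ^ (ϖ ^ ((4 : ℝ) / 3))⌋₊), p) = 1 := by
  have hX0 : 0 < X := one_pos.trans hX
  have hϖ0 : 0 < ϖ := by rw [hϖ]; norm_num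
  have hfloor : ⌊X ^ (ϖ ^ ((4 : ℝ) / 3))⌋₊ ≤ ⌊X ^ ϖ⌋₊ := by
    refine Nat.floor_le_floor (Real.rpow_le_rpow_of_exponent_le hX.le ?_)
    simpa using Real.rpow_le_rpow_of_exponent_ge hϖ0 (by rw [hϖ]; norm_num)
      (by norm_num : (1 : ℝ) ≤ 4 / 3)
  have hR : X ^ (-ϖ) * R * X ^ ϖ = R := by
    rw [mul_right_comm, ← Real.rpow_add hX0, neg_add_cancel, Real.rpow_zero, one_mul]
  have hlow : X ^ ϖ ≤ X ^ (-ϖ) * R := by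
    calc X ^ ϖ = X ^ (-ϖ) * X ^ (2 * ϖ) := by rw [← Real.rpow_add hX0]; ring_nf
      _ ≤ X ^ (-ϖ) * R := mul_le_mul_of_nonneg_left hR1 (by positivity)
  have hhigh : X ^ (-ϖ) * R ≤ X ^ ((1 : ℝ) / 8 - 4 * ϖ) := by
    calc X ^ (-ϖ) * R ≤ R := mul_le_of_le_one_left ((Real.rpow_nonneg hX0.le _).trans hR1)
          (Real.rpow_le_one_of_one_le_of_nonpos hX.le (by linarith))
      _ ≤ X ^ (45 * ϖ) := hR2
      _ ≤ X ^ ((1 : ℝ) / 8 - 4 * ϖ) :=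
          Real.rpow_le_rpow_of_exponent_le hX.le (by rw [hϖ]; norm_num)
  obtain ⟨q, r, hdqr, hTr, hrR, hq⟩ := exists_eq_mul_mem_Ioo_coprime hsf
    (Nat.prod_primes_Icc_dvd_of_le hfloor)
    (fun p hp hpP => (Nat.le_floor_iff (by positivity)).1
      (Nat.le_of_prime_dvd_prod_primes_Icc hp hpP))
    (hP0.trans_le hlow) (hhigh.trans_lt hP1)
  exact ⟨q, r, hdqr, hTr, hR ▸ hrR, hq⟩

/-- The factorization (well-factorable moduli) lemma in the small-`R*` range:
a squarefree modulus `d` satisfying the stated size and smoothness constraints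
admits a factorization `d = q·r` with `X^{-ϖ} R* < r < R*` and `gcd(q, P₀) = 1`. -/
theorem stmt6 (k : ℕ) (X ϖ : ℝ) (hϖ : ϖ = 1 / 1168) (hX : 1 < X)
    (d : ℕ) (hsf : Squarefree d)
    (hd1 : X ^ ((1 : ℝ) / 2 - 1 / (12 * (k + 1))) < (d : ℝ))
    (hd2 : (d : ℝ) < X ^ ((1 : ℝ) / 2 + 2 * ϖ))
    (hP0 : (Nat.gcd d (∏ p ∈ Finset.filter Nat.Prime
        (Finset.Icc 2 ⌊X ^ (ϖ ^ ((4 : ℝ) / 3))⌋₊), p) : ℝ) < X ^ ϖ)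
    (hP1 : X ^ ((1 : ℝ) / 8 - 4 * ϖ) < (Nat.gcd d (∏ p ∈ Finset.filter Nat.Prime
        (Finset.Icc 2 ⌊X ^ ϖ⌋₊), p) : ℝ))
    (R : ℝ) (hR1 : X ^ (2 * ϖ) ≤ R) (hR2 : R ≤ X ^ (45 * ϖ)) :
    ∃ q r : ℕ, d = q * r ∧ X ^ (-ϖ) * R < (r : ℝ) ∧ (r : ℝ) < R ∧
      Nat.gcd q (∏ p ∈ Finset.filter Nat.Prime
        (Finset.Icc 2 ⌊X ^ (ϖ ^ ((4 : ℝ) / 3))⌋₊), p) = 1 :=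
  stmt6_general X ϖ hϖ hX d hsf hP0 hP1 R hR1 hR2
end
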